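/- Let P, Q : ℤ → ℝ with P(n) ≠ 0 for all n. Then 𝒫₃ applied to the pair (−1/P, 0) equals ( P(Q⁺ − Q), Q(Q⁺ − Q⁻ − P + P⁻) ). In other words, the first positive flow of the Ablowitz–Ladik hierarchy is the Hamiltonian system with respect to the third Hamiltonian operator 𝒫₃ with Hamiltonian G₀ = −Σₙ log P(n), whose variational derivatives are δG₀/δP = −1/P and δG₀/δQ = 0. -/
import Mathlib


/-- The shift operator `Λ`: `(shift f) n = f (n+1)`. -/
def shift (f : ℤ → ℝ) : ℤ → ℝ := fun n => f (n + 1)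

/-- The inverse shift operator `Λ⁻¹`: `(shiftInv f) n = f (n-1)`. -/
def shiftInv (f : ℤ → ℝ) : ℤ → ℝ := fun n => f (n - 1)

/-- The third Hamiltonian operator of the Ablowitz–Ladik hierarchy, the 2×2 matrix
difference operator
`𝒫₃ = [[P(QΛ⁻¹ − ΛQ)P, P((Q − ΛQΛ)(1+Λ⁻¹) − P(1−Λ))Q],`
`      [Q((Λ+1)(Λ⁻¹QΛ⁻¹ − Q) + (1−Λ⁻¹)P)P, Q((1+Λ⁻¹)(Q − ΛQΛ)(1+Λ⁻¹) + 2(PΛ − Λ⁻¹P))Q]]`,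
where functions act by pointwise multiplication and entries are operator compositions. -/
def P3op (P Q : ℤ → ℝ) (ξ : (ℤ → ℝ) × (ℤ → ℝ)) : (ℤ → ℝ) × (ℤ → ℝ) :=
  -- g = Qξ₂ and h = Pξ₁ are the pointwise products appearing on the right of each entry
  let g := Q * ξ.2
  let h := P * ξ.1
  let hh := g + shiftInv g            -- (1+Λ⁻¹) applied to g
  let w := Q * hh - shift (Q * shift hh)  -- (Q − ΛQΛ) applied to hh
  (P * (Q * shiftInv h - shift (Q * h))
     + P * ((Q * hh - shift (Q * shift hh)) - P * (g - shift g)),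
   Q * ((shift (shiftInv (Q * shiftInv h) - Q * h) + (shiftInv (Q * shiftInv h) - Q * h))
        + (P * h - shiftInv (P * h)))
     + Q * ((w + shiftInv w) + 2 * (P * shift g - shiftInv (P * g))))

/-- The first positive flow
`P_{t₀} = P(Q⁺ − Q)`, `Q_{t₀} = Q(Q⁺ − Q⁻ − P + P⁻)` of the Ablowitz–Ladik hierarchy is
the Hamiltonian system with respect to the third Hamiltonian operator `𝒫₃` with
Hamiltonian `G₀ = −Σₙ log P(n)`, whose variational derivatives are `δG₀/δP = −1/P` and
`δG₀/δQ = 0`: `𝒫₃` applied to `(−1/P, 0)` equals `( P(Q⁺ − Q), Q(Q⁺ − Q⁻ − P + P⁻) )`. -/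
theorem first_positive_flow_hamiltonian_P3 (P Q : ℤ → ℝ) (hP : ∀ n : ℤ, P n ≠ 0) :
    P3op P Q (fun n => -(1 / P n), 0) =
      (fun n => P n * (Q (n + 1) - Q n),
       fun n => Q n * (Q (n + 1) - Q (n - 1) - P n + P (n - 1))) := by
  have key : ∀ n : ℤ, P n * -(1 / P n) = -1 := fun n => by
    rw [mul_neg, mul_one_div, div_self (hP n)]
  refine Prod.ext (funext fun n => ?_) (funext fun n => ?_) <;>
    simp only [P3op, shift, shiftInv, Pi.mul_apply, Pi.add_apply, Pi.sub_apply,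
      Pi.zero_apply, Pi.ofNat_apply, key, mul_zero, mul_neg, mul_one] <;> ring
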